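/- Let w be a word, S ⊆ ℤ_{>0} finite, and consider the relation S ⋆ (u aba v) = S ⋆ (u bab v) for all positive integers a, b and words u, v. This holds for the ⋆ column-bumping action; in particular S ⋆ aba = S ⋆ bab for all S, a, b. -/

import Mathlib

/-!
An element `t ∈ S` survives `S ⋆ m` exactly when `t < m` or `S` meets `[m, t)`, i.e. when `t`
is not the least element of `S` above `m`. In these terms, for `a < b`:
the letter `a` survives bumping by `b`, so `S ⋆ aba = S ⋆ ab`; if `S` meets `[a, b)` the
bumps by `a` and `b` remove different elements and commute, so `S ⋆ bab = S ⋆ abb = S ⋆ ab`;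
otherwise `a` bumps the same element of `S` as `b` would, and in `S ⋆ b` it bumps `b` itself,
so `S ⋆ ba = S ⋆ a`.
-/

/-- The `⋆` column-bumping action of a single letter `m` on a finite set `S`:
if no element of `S` is `≥ m`, then `S ⋆ m = S ∪ {m}`; otherwise
`S ⋆ m = (S \ {m'}) ∪ {m}` where `m' = min {s ∈ S : s ≥ m}`. -/
def starLetter (S : Finset ℕ) (m : ℕ) : Finset ℕ :=
  if h : (S.filter (fun s => m ≤ s)).Nonempty then
    insert m (S.erase ((S.filter (fun s => m ≤ s)).min' h))
  else insert m S

/-- The `⋆` action of a word, letter by letter from the left. -/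
def star (S : Finset ℕ) (w : List ℕ) : Finset ℕ :=
  w.foldl starLetter S

theorem mem_starLetter {S : Finset ℕ} {m t : ℕ} :
    t ∈ starLetter S m ↔ t = m ∨ t ∈ S ∧ (t < m ∨ ∃ s ∈ S, m ≤ s ∧ s < t) := by
  unfold starLetter
  split_ifs with h
  · have hmin := Finset.min'_mem _ h
    have hle := fun s hs => Finset.min'_le (S.filter (fun s => m ≤ s)) s hs
    simp only [Finset.mem_filter] at hmin hle
    simp only [Finset.mem_insert, Finset.mem_erase]
    grind
  · simp only [Finset.not_nonempty_iff_eq_empty, Finset.filter_eq_empty_iff, not_le] at h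
    simp only [Finset.mem_insert]
    grind

theorem mem_starLetter_self (S : Finset ℕ) (m : ℕ) : m ∈ starLetter S m :=
  mem_starLetter.2 (Or.inl rfl)

theorem mem_starLetter_of_lt {S : Finset ℕ} {m t : ℕ} (ht : t ∈ S) (htm : t < m) :
    t ∈ starLetter S m :=
  mem_starLetter.2 (Or.inr ⟨ht, Or.inl htm⟩)

theorem mem_starLetter_of_mem_of_le_of_lt {S : Finset ℕ} {m s t : ℕ} (ht : t ∈ S) (hs : s ∈ S)
    (hms : m ≤ s) (hst : s < t) : t ∈ starLetter S m :=
  mem_starLetter.2 (Or.inr ⟨ht, Or.inr ⟨s, hs, hms, hst⟩⟩)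

theorem starLetter_eq_self {S : Finset ℕ} {m : ℕ} (hm : m ∈ S) : starLetter S m = S := by
  ext t
  grind [mem_starLetter]

theorem starLetter_starLetter_of_forall_le {S : Finset ℕ} {a b : ℕ} (hab : a < b)
    (hS : ∀ s ∈ S, a ≤ s → b ≤ s) :
    starLetter (starLetter S b) a = starLetter S a := by
  ext t
  grind [mem_starLetter, mem_starLetter_self]

theorem starLetter_comm_of_mem_Ico {S : Finset ℕ} {a b : ℕ} (hS : ∃ s ∈ S, a ≤ s ∧ s < b) :
    starLetter (starLetter S b) a = starLetter (starLetter S a) b := by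
  ext t
  grind [mem_starLetter, mem_starLetter_self, mem_starLetter_of_mem_of_le_of_lt]

theorem starLetter_braid_of_lt (S : Finset ℕ) {a b : ℕ} (hab : a < b) :
    starLetter (starLetter (starLetter S a) b) a =
      starLetter (starLetter (starLetter S b) a) b := by
  rw [starLetter_eq_self (mem_starLetter_of_lt (mem_starLetter_self S a) hab)]
  by_cases hS : ∃ s ∈ S, a ≤ s ∧ s < b
  · rw [starLetter_comm_of_mem_Ico hS, starLetter_eq_self (mem_starLetter_self _ b)]
  · push Not at hS
    rw [starLetter_starLetter_of_forall_le hab hS]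

theorem starLetter_braid (S : Finset ℕ) (a b : ℕ) :
    starLetter (starLetter (starLetter S a) b) a =
      starLetter (starLetter (starLetter S b) a) b := by
  rcases lt_trichotomy a b with hab | rfl | hba
  · exact starLetter_braid_of_lt S hab
  · rfl
  · exact (starLetter_braid_of_lt S hba).symm

/-- The `⋆` action satisfies the braid-type relation
`S ⋆ (u aba v) = S ⋆ (u bab v)` for all letters `a`, `b` and words `u`, `v`;
in particular `S ⋆ aba = S ⋆ bab` for all `S`, `a`, `b`. -/
theorem stmt19 :
    (∀ (S : Finset ℕ) (u v : List ℕ) (a b : ℕ),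
      star S (u ++ [a, b, a] ++ v) = star S (u ++ [b, a, b] ++ v)) ∧
    (∀ (S : Finset ℕ) (a b : ℕ), star S [a, b, a] = star S [b, a, b]) := by
  have braid (S : Finset ℕ) (a b : ℕ) : star S [a, b, a] = star S [b, a, b] := by
    simpa only [_root_.star, List.foldl_cons, List.foldl_nil] using starLetter_braid S a b
  refine ⟨fun S u v a b => ?_, braid⟩
  simp only [_root_.star, List.foldl_append]
  exact congrArg (List.foldl starLetter · v) (braid _ a b)
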